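/- arXiv:2410.16265 — 2 statements merged into one kernel-verified Lean document; each statement's English description precedes it below -/
import Mathlib

section
/- Quantum bridge on three-qubit excitations (bridge on the first index): there exist real-valued functions m₁, ..., m₉ of β such that for every real β, on four qubits A, B, C, D, exp(β S^-_{AD}) · exp(β P^-_{ABC}) · exp(β S^-_{AD}) = m₁(β)·𝟙 + m₂(β)·Z_B Z_C + m₃(β)·Z_A Z_D + m₄(β)·Z_A Z_B + m₅(β)·Z_A Z_C + m₆(β)·Z_A Z_B Z_C Z_D + m₇(β)·S^-_{AD} + m₈(β)·Z_B Z_C S^-_{AD} + m₉(β)·P^-_{ABC} − sin²(β)·P^+_{DBC}; in particular the sandwiched product has support on the three-qubit excitation P^+_{DBC} acting on the ancilla qubit D, with coefficient −sin²(β). -/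
open Matrix Complex
open scoped Kronecker

noncomputable section
namespace PaperQAOA

/-- Pauli X matrix. -/
def X : Matrix (Fin 2) (Fin 2) ℂ := !![0, 1; 1, 0]
/-- Pauli Y matrix. -/
def Y : Matrix (Fin 2) (Fin 2) ℂ := !![0, -Complex.I; Complex.I, 0]
/-- Pauli Z matrix. -/
def Z : Matrix (Fin 2) (Fin 2) ℂ := !![1, 0; 0, -1]
/-- Qubit creation operator `Q† = (X - iY)/2`. -/
def Qdag : Matrix (Fin 2) (Fin 2) ℂ := (1/2 : ℂ) • (X - Complex.I • Y)
/-- Qubit annihilation operator `Q = (X + iY)/2`. -/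
def Qann : Matrix (Fin 2) (Fin 2) ℂ := (1/2 : ℂ) • (X + Complex.I • Y)

/-- Action on qubit A of a two-qubit system. -/
def A2 (M : Matrix (Fin 2) (Fin 2) ℂ) : Matrix (Fin 2 × Fin 2) (Fin 2 × Fin 2) ℂ :=
  M ⊗ₖ (1 : Matrix (Fin 2) (Fin 2) ℂ)
/-- Action on qubit B of a two-qubit system. -/
def B2 (M : Matrix (Fin 2) (Fin 2) ℂ) : Matrix (Fin 2 × Fin 2) (Fin 2 × Fin 2) ℂ :=
  (1 : Matrix (Fin 2) (Fin 2) ℂ) ⊗ₖ M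

/-- Action on qubit A of a three-qubit system. -/
def A3 (M : Matrix (Fin 2) (Fin 2) ℂ) :
    Matrix (Fin 2 × Fin 2 × Fin 2) (Fin 2 × Fin 2 × Fin 2) ℂ :=
  M ⊗ₖ (1 : Matrix (Fin 2 × Fin 2) (Fin 2 × Fin 2) ℂ)
/-- Action on qubit B of a three-qubit system. -/
def B3 (M : Matrix (Fin 2) (Fin 2) ℂ) :
    Matrix (Fin 2 × Fin 2 × Fin 2) (Fin 2 × Fin 2 × Fin 2) ℂ :=
  (1 : Matrix (Fin 2) (Fin 2) ℂ) ⊗ₖ (M ⊗ₖ (1 : Matrix (Fin 2) (Fin 2) ℂ))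
/-- Action on qubit C of a three-qubit system. -/
def C3 (M : Matrix (Fin 2) (Fin 2) ℂ) :
    Matrix (Fin 2 × Fin 2 × Fin 2) (Fin 2 × Fin 2 × Fin 2) ℂ :=
  (1 : Matrix (Fin 2) (Fin 2) ℂ) ⊗ₖ ((1 : Matrix (Fin 2) (Fin 2) ℂ) ⊗ₖ M)

/-- Action on qubit A of a four-qubit system. -/
def A4 (M : Matrix (Fin 2) (Fin 2) ℂ) :
    Matrix (Fin 2 × Fin 2 × Fin 2 × Fin 2) (Fin 2 × Fin 2 × Fin 2 × Fin 2) ℂ :=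
  M ⊗ₖ (1 : Matrix (Fin 2 × Fin 2 × Fin 2) (Fin 2 × Fin 2 × Fin 2) ℂ)
/-- Action on qubit B of a four-qubit system. -/
def B4 (M : Matrix (Fin 2) (Fin 2) ℂ) :
    Matrix (Fin 2 × Fin 2 × Fin 2 × Fin 2) (Fin 2 × Fin 2 × Fin 2 × Fin 2) ℂ :=
  (1 : Matrix (Fin 2) (Fin 2) ℂ) ⊗ₖ (M ⊗ₖ (1 : Matrix (Fin 2 × Fin 2) (Fin 2 × Fin 2) ℂ))
/-- Action on qubit C of a four-qubit system. -/
def C4 (M : Matrix (Fin 2) (Fin 2) ℂ) :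
    Matrix (Fin 2 × Fin 2 × Fin 2 × Fin 2) (Fin 2 × Fin 2 × Fin 2 × Fin 2) ℂ :=
  (1 : Matrix (Fin 2) (Fin 2) ℂ) ⊗ₖ
    ((1 : Matrix (Fin 2) (Fin 2) ℂ) ⊗ₖ (M ⊗ₖ (1 : Matrix (Fin 2) (Fin 2) ℂ)))
/-- Action on qubit D of a four-qubit system. -/
def D4 (M : Matrix (Fin 2) (Fin 2) ℂ) :
    Matrix (Fin 2 × Fin 2 × Fin 2 × Fin 2) (Fin 2 × Fin 2 × Fin 2 × Fin 2) ℂ :=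
  (1 : Matrix (Fin 2) (Fin 2) ℂ) ⊗ₖ
    ((1 : Matrix (Fin 2) (Fin 2) ℂ) ⊗ₖ ((1 : Matrix (Fin 2) (Fin 2) ℂ) ⊗ₖ M))

/-- Two-qubit excitation operator `S⁺ = Q†ₑ Q_f + Qₑ Q†_f` for qubits given by the
embeddings `e` and `f`. -/
def Sp {m : Type} [Fintype m] (e f : Matrix (Fin 2) (Fin 2) ℂ → Matrix m m ℂ) : Matrix m m ℂ :=
  e Qdag * f Qann + e Qann * f Qdag
/-- Two-qubit excitation operator `S⁻ = Q†ₑ Q_f - Qₑ Q†_f`. -/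
def Sm {m : Type} [Fintype m] (e f : Matrix (Fin 2) (Fin 2) ℂ → Matrix m m ℂ) : Matrix m m ℂ :=
  e Qdag * f Qann - e Qann * f Qdag

/-- Three-qubit excitation operator `P⁺ = Q†ₑ Q_f Q_g + Qₑ Q†_f Q†_g`. -/
def Pp {m : Type} [Fintype m] (e f g : Matrix (Fin 2) (Fin 2) ℂ → Matrix m m ℂ) : Matrix m m ℂ :=
  e Qdag * f Qann * g Qann + e Qann * f Qdag * g Qdag
/-- Three-qubit excitation operator `P⁻ = Q†ₑ Q_f Q_g - Qₑ Q†_f Q†_g`. -/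
def Pm {m : Type} [Fintype m] (e f g : Matrix (Fin 2) (Fin 2) ℂ → Matrix m m ℂ) : Matrix m m ℂ :=
  e Qdag * f Qann * g Qann - e Qann * f Qdag * g Qdag

/- Auxiliary machinery -/

abbrev M2 := Matrix (Fin 2) (Fin 2) ℂ
abbrev Q4 := Fin 2 × Fin 2 × Fin 2 × Fin 2

/-- `|1⟩⟨0|`, the literal form of `Qdag`. -/
def ea : M2 := !![0, 0; 1, 0]
/-- `|0⟩⟨1|`, the literal form of `Qann`. -/
def eb : M2 := !![0, 1; 0, 0]
/-- `|1⟩⟨1|`. -/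
def en : M2 := !![0, 0; 0, 1]
/-- `|0⟩⟨0|`. -/
def ep : M2 := !![1, 0; 0, 0]

/-- Four-fold Kronecker product. -/
def K4 (m₁ m₂ m₃ m₄ : M2) : Matrix Q4 Q4 ℂ := m₁ ⊗ₖ (m₂ ⊗ₖ (m₃ ⊗ₖ m₄))

lemma Qdag_eq : Qdag = ea := by
  ext i j
  fin_cases i <;> fin_cases j <;>
    simp [Qdag, X, Y, ea, Complex.ext_iff] <;> norm_num

lemma Qann_eq : Qann = eb := by
  ext i j
  fin_cases i <;> fin_cases j <;>
    simp [Qann, X, Y, eb, Complex.ext_iff] <;> norm_num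

lemma one2_eq : (1 : M2) = ep + en := by
  ext i j; fin_cases i <;> fin_cases j <;> simp [ep, en, Matrix.one_apply]

lemma Z_eq : Z = ep - en := by
  ext i j; fin_cases i <;> fin_cases j <;> simp [Z, ep, en]

section table
-- product table
lemma ea_ea : ea * ea = 0 := by ext i j; fin_cases i <;> fin_cases j <;> simp [ea, Matrix.mul_apply, Fin.sum_univ_two]
lemma ea_eb : ea * eb = en := by ext i j; fin_cases i <;> fin_cases j <;> simp [ea, eb, en, Matrix.mul_apply, Fin.sum_univ_two]
lemma ea_en : ea * en = 0 := by ext i j; fin_cases i <;> fin_cases j <;> simp [ea, en, Matrix.mul_apply, Fin.sum_univ_two]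
lemma ea_ep : ea * ep = ea := by ext i j; fin_cases i <;> fin_cases j <;> simp [ea, ep, Matrix.mul_apply, Fin.sum_univ_two]
lemma eb_ea : eb * ea = ep := by ext i j; fin_cases i <;> fin_cases j <;> simp [ea, eb, ep, Matrix.mul_apply, Fin.sum_univ_two]
lemma eb_eb : eb * eb = 0 := by ext i j; fin_cases i <;> fin_cases j <;> simp [eb, Matrix.mul_apply, Fin.sum_univ_two]
lemma eb_en : eb * en = eb := by ext i j; fin_cases i <;> fin_cases j <;> simp [eb, en, Matrix.mul_apply, Fin.sum_univ_two]
lemma eb_ep : eb * ep = 0 := by ext i j; fin_cases i <;> fin_cases j <;> simp [eb, ep, Matrix.mul_apply, Fin.sum_univ_two]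
lemma en_ea : en * ea = ea := by ext i j; fin_cases i <;> fin_cases j <;> simp [ea, en, Matrix.mul_apply, Fin.sum_univ_two]
lemma en_eb : en * eb = 0 := by ext i j; fin_cases i <;> fin_cases j <;> simp [eb, en, Matrix.mul_apply, Fin.sum_univ_two]
lemma en_en : en * en = en := by ext i j; fin_cases i <;> fin_cases j <;> simp [en, Matrix.mul_apply, Fin.sum_univ_two]
lemma en_ep : en * ep = 0 := by ext i j; fin_cases i <;> fin_cases j <;> simp [en, ep, Matrix.mul_apply, Fin.sum_univ_two]
lemma ep_ea : ep * ea = 0 := by ext i j; fin_cases i <;> fin_cases j <;> simp [ea, ep, Matrix.mul_apply, Fin.sum_univ_two]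
lemma ep_eb : ep * eb = eb := by ext i j; fin_cases i <;> fin_cases j <;> simp [eb, ep, Matrix.mul_apply, Fin.sum_univ_two]
lemma ep_en : ep * en = 0 := by ext i j; fin_cases i <;> fin_cases j <;> simp [en, ep, Matrix.mul_apply, Fin.sum_univ_two]
lemma ep_ep : ep * ep = ep := by ext i j; fin_cases i <;> fin_cases j <;> simp [ep, Matrix.mul_apply, Fin.sum_univ_two]
end table

lemma K4_mul (a b c d e f g h : M2) :
    K4 a b c d * K4 e f g h = K4 (a * e) (b * f) (c * g) (d * h) := by
  simp [K4, Matrix.mul_kronecker_mul]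

lemma K4_zero₁ (b c d : M2) : K4 0 b c d = 0 := by simp [K4]
lemma K4_zero₂ (a c d : M2) : K4 a 0 c d = 0 := by simp [K4]
lemma K4_zero₃ (a b d : M2) : K4 a b 0 d = 0 := by simp [K4]
lemma K4_zero₄ (a b c : M2) : K4 a b c 0 = 0 := by simp [K4]

lemma K4_add₁ (a a' b c d : M2) : K4 (a + a') b c d = K4 a b c d + K4 a' b c d := by
  ext ⟨i1, i2, i3, i4⟩ ⟨j1, j2, j3, j4⟩
  simp [K4, Matrix.kroneckerMap_apply]; ring
lemma K4_add₂ (a b b' c d : M2) : K4 a (b + b') c d = K4 a b c d + K4 a b' c d := by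
  ext ⟨i1, i2, i3, i4⟩ ⟨j1, j2, j3, j4⟩
  simp [K4, Matrix.kroneckerMap_apply]; ring
lemma K4_add₃ (a b c c' d : M2) : K4 a b (c + c') d = K4 a b c d + K4 a b c' d := by
  ext ⟨i1, i2, i3, i4⟩ ⟨j1, j2, j3, j4⟩
  simp [K4, Matrix.kroneckerMap_apply]; ring
lemma K4_add₄ (a b c d d' : M2) : K4 a b c (d + d') = K4 a b c d + K4 a b c d' := by
  ext ⟨i1, i2, i3, i4⟩ ⟨j1, j2, j3, j4⟩
  simp [K4, Matrix.kroneckerMap_apply]; ring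
lemma K4_sub₁ (a a' b c d : M2) : K4 (a - a') b c d = K4 a b c d - K4 a' b c d := by
  ext ⟨i1, i2, i3, i4⟩ ⟨j1, j2, j3, j4⟩
  simp [K4, Matrix.kroneckerMap_apply]; ring
lemma K4_sub₂ (a b b' c d : M2) : K4 a (b - b') c d = K4 a b c d - K4 a b' c d := by
  ext ⟨i1, i2, i3, i4⟩ ⟨j1, j2, j3, j4⟩
  simp [K4, Matrix.kroneckerMap_apply]; ring
lemma K4_sub₃ (a b c c' d : M2) : K4 a b (c - c') d = K4 a b c d - K4 a b c' d := by
  ext ⟨i1, i2, i3, i4⟩ ⟨j1, j2, j3, j4⟩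
  simp [K4, Matrix.kroneckerMap_apply]; ring
lemma K4_sub₄ (a b c d d' : M2) : K4 a b c (d - d') = K4 a b c d - K4 a b c d' := by
  ext ⟨i1, i2, i3, i4⟩ ⟨j1, j2, j3, j4⟩
  simp [K4, Matrix.kroneckerMap_apply]; ring

lemma one_eq_K4 : (1 : Matrix Q4 Q4 ℂ) = K4 1 1 1 1 := by
  simp [K4, Matrix.one_kronecker_one]


lemma A4_eq (M : M2) : A4 M = K4 M 1 1 1 := by
  simp only [A4, K4, ← Matrix.one_kronecker_one]
lemma B4_eq (M : M2) : B4 M = K4 1 M 1 1 := by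
  simp only [B4, K4, ← Matrix.one_kronecker_one]
lemma C4_eq (M : M2) : C4 M = K4 1 1 M 1 := by
  simp only [C4, K4, ← Matrix.one_kronecker_one]
lemma D4_eq (M : M2) : D4 M = K4 1 1 1 M := by
  simp only [D4, K4, ← Matrix.one_kronecker_one]

lemma hSm : Sm A4 D4 = K4 ea 1 1 eb - K4 eb 1 1 ea := by
  simp only [Sm, A4_eq, D4_eq, Qdag_eq, Qann_eq, K4_mul, one_mul, mul_one]
lemma hPm : Pm A4 B4 C4 = K4 ea eb eb 1 - K4 eb ea ea 1 := by
  simp only [Pm, A4_eq, B4_eq, C4_eq, Qdag_eq, Qann_eq, K4_mul, one_mul, mul_one]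
lemma hPp : Pp D4 B4 C4 = K4 1 eb eb ea + K4 1 ea ea eb := by
  simp only [Pp, D4_eq, B4_eq, C4_eq, Qdag_eq, Qann_eq, K4_mul, one_mul, mul_one]

lemma hZBZC : B4 Z * C4 Z = K4 1 Z Z 1 := by
  simp only [B4_eq, C4_eq, K4_mul, one_mul, mul_one]
lemma hZAZD : A4 Z * D4 Z = K4 Z 1 1 Z := by
  simp only [A4_eq, D4_eq, K4_mul, one_mul, mul_one]
lemma hZAZB : A4 Z * B4 Z = K4 Z Z 1 1 := by
  simp only [A4_eq, B4_eq, K4_mul, one_mul, mul_one]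
lemma hZAZC : A4 Z * C4 Z = K4 Z 1 Z 1 := by
  simp only [A4_eq, C4_eq, K4_mul, one_mul, mul_one]
lemma hZ4 : A4 Z * B4 Z * C4 Z * D4 Z = K4 Z Z Z Z := by
  simp only [A4_eq, B4_eq, C4_eq, D4_eq, K4_mul, one_mul, mul_one]
lemma hKZZS : K4 1 Z Z 1 * (K4 ea 1 1 eb - K4 eb 1 1 ea) = K4 ea Z Z eb - K4 eb Z Z ea := by
  simp only [mul_sub, K4_mul, one_mul, mul_one]

lemma hSS : Sm A4 D4 * Sm A4 D4 = -K4 en 1 1 ep - K4 ep 1 1 en := by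
  rw [hSm]
  simp only [sub_mul, mul_sub, K4_mul, one_mul, mul_one, ea_ea, ea_eb, eb_ea, eb_eb,
    K4_zero₁, K4_zero₄]
  abel
lemma hPP : Pm A4 B4 C4 * Pm A4 B4 C4 = -K4 en ep ep 1 - K4 ep en en 1 := by
  rw [hPm]
  simp only [sub_mul, mul_sub, K4_mul, one_mul, mul_one, ea_ea, ea_eb, eb_ea, eb_eb,
    K4_zero₁, K4_zero₂]
  abel
lemma hS3 : Sm A4 D4 * Sm A4 D4 * Sm A4 D4 = -Sm A4 D4 := by
  rw [hSS, hSm]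
  simp only [sub_mul, mul_sub, neg_mul, neg_sub, K4_mul, one_mul, mul_one,
    en_ea, en_eb, ep_ea, ep_eb, ea_eb, eb_ea, ea_ep, eb_en, ea_en, eb_ep,
    K4_zero₁, K4_zero₄, neg_zero, neg_neg]
  abel
lemma hP3 : Pm A4 B4 C4 * Pm A4 B4 C4 * Pm A4 B4 C4 = -Pm A4 B4 C4 := by
  rw [hPP, hPm]
  simp only [sub_mul, mul_sub, neg_mul, neg_sub, K4_mul, one_mul, mul_one,
    en_ea, en_eb, ep_ea, ep_eb, ea_eb, eb_ea, ea_ep, eb_en, ea_en, eb_ep,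
    K4_zero₁, K4_zero₂, neg_zero, neg_neg]
  abel

open NormedSpace in
lemma exp_cube {N : Type*} [Fintype N] [DecidableEq N] (M : Matrix N N ℂ)
    (h3 : M * M * M = -M) (z : ℂ) :
    NormedSpace.exp (z • M) = 1 + Complex.sin z • M + (1 - Complex.cos z) • (M * M) := by
  letI : SeminormedRing (Matrix N N ℂ) := Matrix.linftyOpSemiNormedRing
  letI : NormedRing (Matrix N N ℂ) := Matrix.linftyOpNormedRing
  letI : NormedAlgebra ℂ (Matrix N N ℂ) := Matrix.linftyOpNormedAlgebra
  have hM3 : M * (M * M) = -M := by rw [← mul_assoc]; exact h3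
  have hodd : ∀ k : ℕ, M ^ (2 * k + 1) = ((-1 : ℂ) ^ k) • M := by
    intro k
    induction k with
    | zero => simp
    | succ k ih =>
      have hn : 2 * (k + 1) + 1 = (2 * k + 1) + 2 := by ring
      rw [hn, pow_add, ih, sq, smul_mul_assoc, hM3]
      module
  have heven : ∀ k : ℕ, M ^ (2 * k + 2) = ((-1 : ℂ) ^ k) • (M * M) := by
    intro k
    have hn : 2 * k + 2 = (2 * k + 1) + 1 := by ring
    rw [hn, pow_succ, hodd k, smul_mul_assoc]
  rw [exp_eq_tsum ℂ]
  refine HasSum.tsum_eq ?_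
  have hsplit : (1 : Matrix N N ℂ) + Complex.sin z • M + (1 - Complex.cos z) • (M * M)
      = ((1 - Complex.cos z) • (M * M) + 1) + Complex.sin z • M := by abel
  rw [hsplit]
  refine HasSum.even_add_odd ?_ ?_
  · -- even part
    have h1 : HasSum
        (fun k : ℕ => ((-1 : ℂ) ^ (k + 1) * z ^ (2 * (k + 1)) / ((Nat.factorial (2 * (k + 1)) : ℂ))))
        (Complex.cos z - 1) := by
      refine (hasSum_nat_add_iff
        (f := fun n : ℕ => ((-1 : ℂ) ^ n * z ^ (2 * n) / ((Nat.factorial (2 * n) : ℂ)))) 1).mpr ?_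
      simpa using Complex.hasSum_cos z
    have h0 : HasSum
        (fun k : ℕ => -((-1 : ℂ) ^ (k + 1) * z ^ (2 * (k + 1)) / ((Nat.factorial (2 * (k + 1)) : ℂ))))
        (1 - Complex.cos z) := by simpa [neg_sub] using h1.neg
    have hc : HasSum (fun k : ℕ => (((Nat.factorial (2 * (k + 1)) : ℂ))⁻¹) • (z • M) ^ (2 * (k + 1)))
        ((1 - Complex.cos z) • (M * M)) := by
      have hfun : (fun k : ℕ => (((Nat.factorial (2 * (k + 1)) : ℂ))⁻¹) • (z • M) ^ (2 * (k + 1)))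
          = fun k : ℕ =>
            (-((-1 : ℂ) ^ (k + 1) * z ^ (2 * (k + 1)) / ((Nat.factorial (2 * (k + 1)) : ℂ)))) • (M * M) := by
        funext k
        rw [smul_pow, show 2 * (k + 1) = 2 * k + 2 from by ring, heven k, smul_smul, smul_smul]
        congr 1
        ring
      rw [hfun]
      exact h0.smul_const (M * M)
    have := (hasSum_nat_add_iff
      (f := fun k : ℕ => (((Nat.factorial (2 * k) : ℂ))⁻¹) • (z • M) ^ (2 * k)) 1).mp hc
    simpa using this
  · -- odd part
    have hfun : (fun k : ℕ => (((Nat.factorial (2 * k + 1) : ℂ))⁻¹) • (z • M) ^ (2 * k + 1))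
        = fun k : ℕ => ((-1 : ℂ) ^ k * z ^ (2 * k + 1) / ((Nat.factorial (2 * k + 1) : ℂ))) • M := by
      funext k
      rw [smul_pow, hodd k, smul_smul, smul_smul]
      congr 1
      ring
    show HasSum (fun k : ℕ => (((Nat.factorial (2 * k + 1) : ℂ))⁻¹) • (z • M) ^ (2 * k + 1)) _
    rw [hfun]
    exact (Complex.hasSum_sin z).smul_const M

lemma hexpSm (β : ℝ) :
    NormedSpace.exp ((β : ℂ) • Sm A4 D4) =
      1 + (Real.sin β : ℂ) • (K4 ea 1 1 eb - K4 eb 1 1 ea)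
        + (1 - (Real.cos β : ℂ)) • (-K4 en 1 1 ep - K4 ep 1 1 en) := by
  rw [exp_cube (Sm A4 D4) hS3 (β : ℂ), hSS, hSm, ← Complex.ofReal_sin, ← Complex.ofReal_cos]

lemma hexpPm (β : ℝ) :
    NormedSpace.exp ((β : ℂ) • Pm A4 B4 C4) =
      1 + (Real.sin β : ℂ) • (K4 ea eb eb 1 - K4 eb ea ea 1)
        + (1 - (Real.cos β : ℂ)) • (-K4 en ep ep 1 - K4 ep en en 1) := by
  rw [exp_cube (Pm A4 B4 C4) hP3 (β : ℂ), hPP, hPm, ← Complex.ofReal_sin, ← Complex.ofReal_cos]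

set_option maxHeartbeats 1000000 in
lemma key (s c : ℂ) :
    (1 + s • (K4 ea 1 1 eb - K4 eb 1 1 ea) + (1 - c) • (-K4 en 1 1 ep - K4 ep 1 1 en)) *
      (1 + s • (K4 ea eb eb 1 - K4 eb ea ea 1) + (1 - c) • (-K4 en ep ep 1 - K4 ep en en 1)) *
      (1 + s • (K4 ea 1 1 eb - K4 eb 1 1 ea) + (1 - c) • (-K4 en 1 1 ep - K4 ep 1 1 en)) =
    (1 - 9/4*(1-c) + 3/2*(1-c)^2 - 1/4*(1-c)^3) • (1 : Matrix Q4 Q4 ℂ)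
      + (-(1/4)*(1-c) + 1/2*(1-c)^2 - 1/4*(1-c)^3) • K4 1 Z Z 1
      + (2*(1-c) - 3/2*(1-c)^2 + 1/4*(1-c)^3) • K4 Z 1 1 Z
      + (1/4*(1-c)) • K4 Z Z 1 1
      + (1/4*(1-c)) • K4 Z 1 Z 1
      + (-(1/2)*(1-c)^2 + 1/4*(1-c)^3) • K4 Z Z Z Z
      + (s*(2 - 5/2*(1-c) + 1/2*(1-c)^2)) • (K4 ea 1 1 eb - K4 eb 1 1 ea)
      + (s*(-(1/2)*(1-c) + 1/2*(1-c)^2)) • (K4 ea Z Z eb - K4 eb Z Z ea)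
      + (s*(1 - (1-c))) • (K4 ea eb eb 1 - K4 eb ea ea 1)
      - s^2 • (K4 1 eb eb ea + K4 1 ea ea eb)
      + (s^2 + c^2 - 1) •
          (-(c • K4 en en en ep) - K4 en en ep ep - K4 en ep en ep - K4 en ep ep ep
            - K4 ep en en en - K4 ep en ep en - K4 ep ep en en - c • K4 ep ep ep en) := by
  simp only [mul_add, add_mul, mul_sub, sub_mul, neg_mul, mul_neg, smul_mul_assoc,
    mul_smul_comm, smul_neg, neg_neg, K4_mul,
    one_mul, mul_one,
    ea_ea, ea_eb, ea_en, ea_ep, eb_ea, eb_eb, eb_en, eb_ep, en_ea, en_eb, en_en, en_ep,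
    ep_ea, ep_eb, ep_en, ep_ep,
    K4_zero₁, K4_zero₂, K4_zero₃, K4_zero₄, smul_zero, zero_mul, mul_zero, add_zero, zero_add]
  rw [one_eq_K4, one2_eq, Z_eq]
  simp only [K4_add₁, K4_add₂, K4_add₃, K4_add₄, K4_sub₁, K4_sub₂, K4_sub₃, K4_sub₄]
  module


/-- **Quantum bridge on three-qubit excitations (bridge on the first index).** There exist
real coefficient functions `m₁,…,m₉` of `β` such that for every real `β`, on four qubits,
`exp(β S⁻_{AD}) exp(β P⁻_{ABC}) exp(β S⁻_{AD}) = m₁ 𝟙 + m₂ Z_B Z_C + m₃ Z_A Z_D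
+ m₄ Z_A Z_B + m₅ Z_A Z_C + m₆ Z_A Z_B Z_C Z_D + m₇ S⁻_{AD} + m₈ Z_B Z_C S⁻_{AD}
+ m₉ P⁻_{ABC} − sin²β · P⁺_{DBC}`; in particular the sandwiched product has support on the
three-qubit excitation `P⁺_{DBC}` acting on the ancilla qubit `D`, with coefficient
`−sin²β`. -/
theorem quantum_bridge_three_qubit_first_index :
    ∃ m₁ m₂ m₃ m₄ m₅ m₆ m₇ m₈ m₉ : ℝ → ℝ, ∀ β : ℝ,
      NormedSpace.exp ((β : ℂ) • Sm A4 D4) * NormedSpace.exp ((β : ℂ) • Pm A4 B4 C4) *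
          NormedSpace.exp ((β : ℂ) • Sm A4 D4) =
        (m₁ β : ℂ) •
            (1 : Matrix (Fin 2 × Fin 2 × Fin 2 × Fin 2) (Fin 2 × Fin 2 × Fin 2 × Fin 2) ℂ)
          + (m₂ β : ℂ) • (B4 Z * C4 Z)
          + (m₃ β : ℂ) • (A4 Z * D4 Z)
          + (m₄ β : ℂ) • (A4 Z * B4 Z)
          + (m₅ β : ℂ) • (A4 Z * C4 Z)
          + (m₆ β : ℂ) • (A4 Z * B4 Z * C4 Z * D4 Z)
          + (m₇ β : ℂ) • Sm A4 D4
          + (m₈ β : ℂ) • (B4 Z * C4 Z * Sm A4 D4)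
          + (m₉ β : ℂ) • Pm A4 B4 C4
          - (Real.sin β : ℂ)^2 • Pp D4 B4 C4 := by
  refine ⟨fun β => 1 - 9/4*(1-Real.cos β) + 3/2*(1-Real.cos β)^2 - 1/4*(1-Real.cos β)^3,
    fun β => -(1/4)*(1-Real.cos β) + 1/2*(1-Real.cos β)^2 - 1/4*(1-Real.cos β)^3,
    fun β => 2*(1-Real.cos β) - 3/2*(1-Real.cos β)^2 + 1/4*(1-Real.cos β)^3,
    fun β => 1/4*(1-Real.cos β),
    fun β => 1/4*(1-Real.cos β),
    fun β => -(1/2)*(1-Real.cos β)^2 + 1/4*(1-Real.cos β)^3,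
    fun β => Real.sin β * (2 - 5/2*(1-Real.cos β) + 1/2*(1-Real.cos β)^2),
    fun β => Real.sin β * (-(1/2)*(1-Real.cos β) + 1/2*(1-Real.cos β)^2),
    fun β => Real.sin β * (1 - (1-Real.cos β)),
    fun β => ?_⟩
  have hkey := key (Real.sin β : ℂ) (Real.cos β : ℂ)
  have hsc : ((Real.sin β : ℂ))^2 + ((Real.cos β : ℂ))^2 - 1 = 0 := by
    norm_cast
    simp [Real.sin_sq_add_cos_sq]
  rw [hsc, zero_smul, add_zero] at hkey
  rw [hexpSm β, hexpPm β, hkey, hZ4, hZBZC, hZAZD, hZAZB, hZAZC, hSm, hPm, hPp, hKZZS]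
  push_cast
  module

end PaperQAOA
end
end

section
/- On three qubits A, B, C, the two-qubit excitation generator on the pair (B, C) commutes with the three-qubit excitation generator: [S^-_{BC}, P^-_{ABC}] = 0; consequently, for every real β, exp(−iβ S^-_{BC}) · exp(−iβ P^-_{ABC}) = exp(−iβ (S^-_{BC} + P^-_{ABC})) = exp(−iβ P^-_{ABC}) · exp(−iβ S^-_{BC}). -/
open Matrix Complex
open scoped Kronecker

noncomputable section
namespace PaperQAOA

lemma sq_ann : Qann * Qann = 0 := by
  ext i j
  fin_cases i <;> fin_cases j <;>
    simp [Qann, X, Y, Matrix.mul_apply, Fin.sum_univ_succ]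

lemma sq_dag : Qdag * Qdag = 0 := by
  ext i j
  fin_cases i <;> fin_cases j <;>
    simp [Qdag, X, Y, Matrix.mul_apply, Fin.sum_univ_succ]

lemma SmPm_comm : Commute (Sm B3 C3) (Pm A3 B3 C3) := by
  have h1 : Sm B3 C3 * Pm A3 B3 C3 = 0 := by
    unfold Sm Pm A3 B3 C3
    simp only [sub_mul, mul_sub, ← Matrix.mul_kronecker_mul, Matrix.one_mul,
      Matrix.mul_one, sq_ann, sq_dag, Matrix.zero_kronecker, Matrix.kronecker_zero,
      Matrix.mul_zero, Matrix.zero_mul, sub_zero, zero_sub, neg_zero]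
  have h2 : Pm A3 B3 C3 * Sm B3 C3 = 0 := by
    unfold Sm Pm A3 B3 C3
    simp only [sub_mul, mul_sub, ← Matrix.mul_kronecker_mul, Matrix.one_mul,
      Matrix.mul_one, sq_ann, sq_dag, Matrix.zero_kronecker, Matrix.kronecker_zero,
      Matrix.mul_zero, Matrix.zero_mul, sub_zero, zero_sub, neg_zero]
  unfold Commute SemiconjBy
  rw [h1, h2]

/-- **Commutation of the two- and three-qubit excitation generators sharing qubits B, C.**
`[S⁻_{BC}, P⁻_{ABC}] = 0`; consequently, for every real `β`,
`exp(−iβ S⁻_{BC}) exp(−iβ P⁻_{ABC}) = exp(−iβ(S⁻_{BC} + P⁻_{ABC}))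
= exp(−iβ P⁻_{ABC}) exp(−iβ S⁻_{BC})`. -/
theorem two_three_qubit_excitation_commute :
    Sm B3 C3 * Pm A3 B3 C3 - Pm A3 B3 C3 * Sm B3 C3 = 0 ∧
    ∀ β : ℝ,
      NormedSpace.exp ((-(Complex.I * β)) • Sm B3 C3) *
          NormedSpace.exp ((-(Complex.I * β)) • Pm A3 B3 C3) =
        NormedSpace.exp ((-(Complex.I * β)) • (Sm B3 C3 + Pm A3 B3 C3)) ∧
      NormedSpace.exp ((-(Complex.I * β)) • (Sm B3 C3 + Pm A3 B3 C3)) =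
        NormedSpace.exp ((-(Complex.I * β)) • Pm A3 B3 C3) *
          NormedSpace.exp ((-(Complex.I * β)) • Sm B3 C3) := by
  have hc := SmPm_comm
  refine ⟨by rw [hc.eq, sub_self], fun β => ?_⟩
  have hc' : Commute ((-(Complex.I * β)) • Sm B3 C3) ((-(Complex.I * β)) • Pm A3 B3 C3) :=
    (hc.smul_left _).smul_right _
  constructor
  · rw [smul_add]
    exact (Matrix.exp_add_of_commute _ _ hc').symm
  · rw [smul_add, add_comm]
    exact Matrix.exp_add_of_commute _ _ hc'.symm

end PaperQAOA
end
end
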